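/- Let f be a formal power series with real coefficients, and for each nonnegative integer n set N_n = N(A(f,n); ℂ∖ℝ). Then N_0 = N_1 = 0 and N_n ≤ N_{n+1} for every n ≥ 1, i.e. 0 = N_0 = N_1 ≤ N_2 ≤ N_3 ≤ ⋯. -/

import Mathlib

noncomputable section
open Filter Polynomial Topology

/-- `f_n → a` weakly: for every `k`, `f_n^{(k)}(0) → k! * a_k`. -/
def WeakConv (f : ℕ → Polynomial ℂ) (a : ℕ → ℂ) : Prop :=
  ∀ k : ℕ, Tendsto (fun n => (Polynomial.derivative^[k] (f n)).eval 0) atTop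
    (𝓝 ((Nat.factorial k : ℂ) * a k))

def WeakConvR (f : ℕ → Polynomial ℝ) (a : ℕ → ℝ) : Prop :=
  ∀ k : ℕ, Tendsto (fun n => (Polynomial.derivative^[k] (f n)).eval 0) atTop
    (𝓝 ((Nat.factorial k : ℝ) * a k))

/-- The nonnegative real axis `[0,∞)` as a subset of `ℂ`. -/
def S0 : Set ℂ := {z : ℂ | z.im = 0 ∧ 0 ≤ z.re}

/-- The Pólya–Obrechkoff class. -/
def PolyaObrechkoff (F : ℂ → ℂ) : Prop :=
  ∃ (ι : Type) (_ : Countable ι) (c : ℂ) (m : ℕ) (α : ℝ) (β : ℂ) (a : ι → ℂ),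
    0 ≤ α ∧
    (∀ j, a j ≠ 0 ∧ 0 ≤ (a j).im) ∧
    Summable (fun j => (‖a j‖⁻¹) ^ 2) ∧
    Summable (fun j => (-(a j)⁻¹).im) ∧
    (∑' j, (-(a j)⁻¹).im) ≤ β.im ∧
    ∀ z : ℂ, F z = c * z ^ m * Complex.exp (-(α : ℂ) * z ^ 2 + β * z) *
      ∏' j, ((1 - z / a j) * Complex.exp (z / a j))

/-- The Laguerre–Pólya class. -/
def LaguerrePolya (F : ℂ → ℂ) : Prop :=
  ∃ (ι : Type) (_ : Countable ι) (c : ℝ) (m : ℕ) (α : ℝ) (β : ℝ) (a : ι → ℝ),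
    0 ≤ α ∧
    (∀ j, a j ≠ 0) ∧
    Summable (fun j => ((a j)⁻¹) ^ 2) ∧
    ∀ z : ℂ, F z = (c : ℂ) * z ^ m * Complex.exp (-(α : ℂ) * z ^ 2 + (β : ℂ) * z) *
      ∏' j, ((1 - z / (a j : ℂ)) * Complex.exp (z / (a j : ℂ)))

/-- The class `LP*`: products of a real polynomial with a Laguerre–Pólya function. -/
def LPStar (F : ℂ → ℂ) : Prop :=
  ∃ (P : Polynomial ℝ) (g : ℂ → ℂ), LaguerrePolya g ∧
    ∀ z : ℂ, F z = (P.map (algebraMap ℝ ℂ)).eval z * g z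

/-- The class `LP(S₀)`. -/
def LPS0 (F : ℂ → ℂ) : Prop :=
  ∃ (ι : Type) (_ : Countable ι) (c : ℝ) (m : ℕ) (α : ℝ) (a : ι → ℝ),
    0 ≤ α ∧
    (∀ j, 0 < a j) ∧
    Summable (fun j => (a j)⁻¹) ∧
    ∀ z : ℂ, F z = (c : ℂ) * z ^ m * Complex.exp (-(α : ℂ) * z) *
      ∏' j, (1 - z / (a j : ℂ))

/-- The class `LP(S₀)*`. -/
def LPS0Star (F : ℂ → ℂ) : Prop :=
  ∃ (P : Polynomial ℝ) (g : ℂ → ℂ), LPS0 g ∧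
    ∀ z : ℂ, F z = (P.map (algebraMap ℝ ℂ)).eval z * g z

/-- `s_k(f) = Σ_j a_j^{-k}`, sum over the roots of `f` with multiplicity. -/
def sPow (k : ℕ) (f : Polynomial ℂ) : ℂ := (f.roots.map (fun a => (a⁻¹) ^ k)).sum

/-- `s̃_k(f) = Σ_j |a_j|^{-k}`, sum over the roots of `f` with multiplicity. -/
def sAbs (k : ℕ) (f : Polynomial ℂ) : ℝ :=
  (f.roots.map (fun a => (‖a‖⁻¹) ^ k)).sum

open scoped Classical in
/-- `N(f;X)`: number of zeros of the polynomial `f` in `X`, with multiplicity. -/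
def NPoly (g : Polynomial ℂ) (X : Set ℂ) : ℕ :=
  Multiset.card (g.roots.filter (fun z => z ∈ X))

/-- `N(f;X)` for a real polynomial, zeros counted in `ℂ`. -/
def NPolyR (g : Polynomial ℝ) (X : Set ℂ) : ℕ := NPoly (g.map (algebraMap ℝ ℂ)) X

/-- The `n`-th Jensen polynomial of the series `Σ a_k z^k`. -/
def jensen (a : ℕ → ℂ) (n : ℕ) : Polynomial ℂ :=
  ∑ k ∈ Finset.range (n + 1),
    Polynomial.C ((n.factorial : ℂ) / ((n - k).factorial : ℂ) * a k) * Polynomial.X ^ k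

def jensenR (a : ℕ → ℝ) (n : ℕ) : Polynomial ℝ :=
  ∑ k ∈ Finset.range (n + 1),
    Polynomial.C ((n.factorial : ℝ) / ((n - k).factorial : ℝ) * a k) * Polynomial.X ^ k

/-- The `n`-th Appell polynomial of the series `Σ a_k z^k`. -/
def appellR (a : ℕ → ℝ) (n : ℕ) : Polynomial ℝ :=
  ∑ k ∈ Finset.range (n + 1),
    Polynomial.C ((n.factorial : ℝ) / ((n - k).factorial : ℝ) * a k) * Polynomial.X ^ (n - k)

/-- Order of vanishing of `F` at `z` (least `m` with `F^{(m)}(z) ≠ 0`; `0` if none). -/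
def zeroOrder (F : ℂ → ℂ) (z : ℂ) : ℕ := sInf {m : ℕ | iteratedDeriv m F z ≠ 0}

/-- `N(F;X)` for an entire function: zeros in `X` counted with multiplicity. -/
def NEnt (F : ℂ → ℂ) (X : Set ℂ) : ℕ∞ := ∑' z : X, (zeroOrder F z : ℕ∞)

/-! Since `A(f,n+1)' = (n+1) A(f,n)`, it suffices that differentiation does not increase the
number of non-real zeros of a real polynomial `p`. That number is `deg p` minus the number of real
zeros, and by Rolle's theorem passing to `p'` lowers the degree by one while losing at most one
real zero. For `n ≤ 1` the Appell polynomial has degree at most one, so all its zeros are real. -/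

namespace Polynomial

theorem filter_roots_map_complex_im_eq_zero (p : ℝ[X]) :
    (p.map (algebraMap ℝ ℂ)).roots.filter (fun z => z.im = 0) = p.roots.map Complex.ofReal := by
  classical
  refine Multiset.ext.2 fun z => ?_
  rw [Multiset.count_filter]
  split_ifs with hz
  · obtain ⟨x, rfl⟩ : ∃ x : ℝ, (x : ℂ) = z := ⟨z.re, Complex.ext rfl hz.symm⟩
    rw [Multiset.count_map_eq_count' _ _ Complex.ofReal_injective, count_roots, count_roots,
      eq_rootMultiplicity_map (algebraMap ℝ ℂ).injective x]
    rfl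
  · refine (Multiset.count_eq_zero.2 fun hmem => ?_).symm
    obtain ⟨x, -, rfl⟩ := Multiset.mem_map.1 hmem
    exact hz (Complex.ofReal_im x)

end Polynomial

open Polynomial

theorem NPolyR_nonreal_eq_card_filter (p : ℝ[X]) :
    NPolyR p {z | z.im ≠ 0} =
      Multiset.card ((p.map (algebraMap ℝ ℂ)).roots.filter (fun z => z.im ≠ 0)) := by
  unfold NPolyR NPoly
  congr!

theorem NPolyR_nonreal_add_card_roots (p : ℝ[X]) :
    NPolyR p {z | z.im ≠ 0} + Multiset.card p.roots = p.natDegree := by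
  rw [NPolyR_nonreal_eq_card_filter, ← Multiset.card_map Complex.ofReal,
    ← filter_roots_map_complex_im_eq_zero, add_comm, ← Multiset.card_add,
    Multiset.filter_add_not, IsAlgClosed.card_roots_map_eq_natDegree_of_injective _
      (algebraMap ℝ ℂ).injective]

theorem NPolyR_nonreal_eq_zero_of_splits {p : ℝ[X]} (hp : p.Splits) :
    NPolyR p {z | z.im ≠ 0} = 0 := by
  have h := NPolyR_nonreal_add_card_roots p
  rw [← hp.natDegree_eq_card_roots] at h
  omega

theorem NPolyR_nonreal_derivative_le (p : ℝ[X]) :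
    NPolyR (derivative p) {z | z.im ≠ 0} ≤ NPolyR p {z | z.im ≠ 0} := by
  have hp := NPolyR_nonreal_add_card_roots p
  have hp' := NPolyR_nonreal_add_card_roots (derivative p)
  have h_rolle := card_roots_le_derivative p
  have h_deg := natDegree_derivative_le p
  omega

theorem NPolyR_C_mul {c : ℝ} (hc : c ≠ 0) (p : ℝ[X]) (X : Set ℂ) :
    NPolyR (C c * p) X = NPolyR p X := by
  unfold NPolyR NPoly
  rw [Polynomial.map_mul, map_C, roots_C_mul _ ((map_ne_zero (algebraMap ℝ ℂ)).2 hc)]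

theorem natDegree_appellR_le (a : ℕ → ℝ) (n : ℕ) : (appellR a n).natDegree ≤ n :=
  natDegree_sum_le_of_forall_le _ _ fun k _ =>
    (natDegree_C_mul_X_pow_le _ _).trans (Nat.sub_le n k)

theorem derivative_appellR (a : ℕ → ℝ) (n : ℕ) :
    derivative (appellR a (n + 1)) = C ((n : ℝ) + 1) * appellR a n := by
  simp only [appellR]
  rw [Finset.sum_range_succ, map_add, map_sum, Finset.mul_sum, Nat.sub_self, pow_zero, mul_one,
    derivative_C, add_zero]
  refine Finset.sum_congr rfl fun k hk => ?_
  obtain ⟨m, rfl⟩ := Nat.exists_eq_add_of_le (Finset.mem_range_succ_iff.1 hk)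
  rw [derivative_C_mul_X_pow, ← mul_assoc, ← C_mul, show k + m + 1 - k = m + 1 by omega,
    Nat.add_sub_cancel, Nat.add_sub_cancel_left]
  congr 2
  rw [Nat.factorial_succ m, Nat.factorial_succ (k + m)]
  push_cast
  field_simp

/-- Theorem 3.6 (1): the numbers `N_n = N(A(f,n); ℂ∖ℝ)` satisfy
`0 = N₀ = N₁ ≤ N₂ ≤ N₃ ≤ ⋯`. -/
theorem statement18 (a : ℕ → ℝ) :
    NPolyR (appellR a 0) {z : ℂ | z.im ≠ 0} = 0 ∧
    NPolyR (appellR a 1) {z : ℂ | z.im ≠ 0} = 0 ∧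
    ∀ n : ℕ, 1 ≤ n →
      NPolyR (appellR a n) {z : ℂ | z.im ≠ 0} ≤
        NPolyR (appellR a (n + 1)) {z : ℂ | z.im ≠ 0} := by
  have h_low : ∀ n ≤ 1, NPolyR (appellR a n) {z : ℂ | z.im ≠ 0} = 0 := fun n hn =>
    NPolyR_nonreal_eq_zero_of_splits <|
      Splits.of_natDegree_le_one ((natDegree_appellR_le a n).trans hn)
  refine ⟨h_low 0 zero_le_one, h_low 1 le_rfl, fun n _ => ?_⟩
  calc NPolyR (appellR a n) {z : ℂ | z.im ≠ 0}
      = NPolyR (derivative (appellR a (n + 1))) {z : ℂ | z.im ≠ 0} := by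
        rw [derivative_appellR, NPolyR_C_mul (by positivity)]
    _ ≤ NPolyR (appellR a (n + 1)) {z : ℂ | z.im ≠ 0} := NPolyR_nonreal_derivative_le _
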